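/- arXiv:2311.09464 — 5 statements merged into one kernel-verified Lean document; each statement's English description precedes it below -/
import Mathlib

section
/- As the complex variable s tends to 1 (with s ≠ 1), the function ζ′(s)/ζ(s) + 1/(s − 1) tends to the Euler–Mascheroni constant γ. -/
/-!
The function `h s = (s - 1) ζ(s)` has a removable singularity at `1`, with `h 1 = 1`; its
difference quotient at `1` is `ζ(s) - 1 / (s - 1)`, which tends to `γ`, so `h' 1 = γ`. Since
`ζ(s) = h s / (s - 1)`, we get `ζ'/ζ + 1 / (s - 1) = h'/h`, which is continuous at `1` with value
`h' 1 / h 1 = γ`.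
-/

open Filter Topology

theorem tendsto_logDeriv_add_one_div_sub_of_eventuallyEq_div {𝕜 : Type*}
    [NontriviallyNormedField 𝕜] [CompleteSpace 𝕜] {f h : 𝕜 → 𝕜} {c : 𝕜}
    (hh : AnalyticAt 𝕜 h c) (hc : h c ≠ 0) (hf : f =ᶠ[𝓝[≠] c] fun s => h s / (s - c)) :
    Tendsto (fun s => logDeriv f s + 1 / (s - c)) (𝓝[≠] c) (𝓝 (logDeriv h c)) := by
  have hcont : ContinuousAt (logDeriv h) c :=
    hh.deriv.continuousAt.div hh.continuousAt hc
  refine (hcont.tendsto.mono_left nhdsWithin_le_nhds).congr' ?_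
  filter_upwards [logDeriv_congr_nhdsNE hf, self_mem_nhdsWithin,
    nhdsWithin_le_nhds (hh.eventually_analyticAt.and (hh.continuousAt.eventually_ne hc))]
    with s hfs (hs : s ≠ c) ⟨hhs, hhs0⟩
  have hsub : s - c ≠ 0 := sub_ne_zero.mpr hs
  rw [hfs, logDeriv_div s hhs0 hsub hhs.differentiableAt (by fun_prop)]
  simp [logDeriv_apply]

noncomputable def subOneMulRiemannZeta : ℂ → ℂ :=
  Function.update (fun s => (s - 1) * riemannZeta s) 1 1

theorem subOneMulRiemannZeta_of_ne {s : ℂ} (hs : s ≠ 1) :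
    subOneMulRiemannZeta s = (s - 1) * riemannZeta s :=
  Function.update_of_ne hs _ _

@[simp]
theorem subOneMulRiemannZeta_one : subOneMulRiemannZeta 1 = 1 :=
  Function.update_self _ _ _

theorem riemannZeta_eventuallyEq_subOneMulRiemannZeta_div :
    riemannZeta =ᶠ[𝓝[≠] 1] fun s => subOneMulRiemannZeta s / (s - 1) := by
  filter_upwards [self_mem_nhdsWithin] with s (hs : s ≠ 1)
  rw [subOneMulRiemannZeta_of_ne hs, mul_div_cancel_left₀ _ (sub_ne_zero.mpr hs)]

theorem analyticAt_subOneMulRiemannZeta_one : AnalyticAt ℂ subOneMulRiemannZeta 1 := by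
  refine Complex.analyticAt_of_differentiable_on_punctured_nhds_of_continuousAt ?_ ?_
  · filter_upwards [self_mem_nhdsWithin] with s (hs : s ≠ 1)
    refine ((differentiableAt_id.sub_const 1).mul
      (differentiableAt_riemannZeta hs)).congr_of_eventuallyEq ?_
    filter_upwards [eventually_ne_nhds hs] with t ht using subOneMulRiemannZeta_of_ne ht
  · simpa only [subOneMulRiemannZeta, continuousAt_update_same] using riemannZeta_residue_one

theorem hasDerivAt_subOneMulRiemannZeta_one :
    HasDerivAt subOneMulRiemannZeta Real.eulerMascheroniConstant 1 := by
  rw [hasDerivAt_iff_tendsto_slope]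
  refine tendsto_riemannZeta_sub_one_div.congr' ?_
  filter_upwards [self_mem_nhdsWithin] with s (hs : s ≠ 1)
  have hsub : s - 1 ≠ 0 := sub_ne_zero.mpr hs
  rw [slope_def_field, subOneMulRiemannZeta_of_ne hs, subOneMulRiemannZeta_one]
  field_simp

theorem zeta_logDeriv_tendsto_eulerMascheroni :
    Tendsto (fun s : ℂ => deriv riemannZeta s / riemannZeta s + 1 / (s - 1))
      (nhdsWithin 1 {(1 : ℂ)}ᶜ) (nhds (Real.eulerMascheroniConstant : ℂ)) := by
  have h := tendsto_logDeriv_add_one_div_sub_of_eventuallyEq_div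
    analyticAt_subOneMulRiemannZeta_one (by simp)
    riemannZeta_eventuallyEq_subOneMulRiemannZeta_div
  rwa [logDeriv_apply, hasDerivAt_subOneMulRiemannZeta_one.deriv, subOneMulRiemannZeta_one,
    div_one] at h
end

section
/- For every integer n ≥ 3, |∑_{k ≤ δ(n)} 1/k − ψ₁(n)| < 1. -/
/-!
Since `η(j) = exp Λ(j)`, we get `log δ(n) = ∑_{m<n} ψ(m)`, and since `ψ` is constant on each
`[m, m + 1)`, this sum is exactly `ψ₁(n)`. So the claim is `|H_N - log N| < 1` for
`N = δ(n) ≥ 2`, which holds because `H_N - log N` decreases strictly from the value `1` at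
`N = 1` to the limit `γ > 0`.
-/

/-- η(j) = p if j = p^k is a power of a prime p (k ≥ 1), and η(j) = 1 otherwise. -/
noncomputable def eta (j : ℕ) : ℕ := if IsPrimePow j then j.minFac else 1

/-- δ(n) = ∏_{m < n} ∏_{j ≤ m} η(j). -/
noncomputable def delta (n : ℕ) : ℕ :=
  ∏ m ∈ Finset.range n, ∏ j ∈ Finset.Icc 1 m, eta j

/-- The Chebyshev psi function ψ(x) = ∑_{m ≤ x} Λ(m). -/
noncomputable def chebyshevPsi (x : ℝ) : ℝ :=
  ∑ m ∈ Finset.Icc 1 ⌊x⌋₊, ArithmeticFunction.vonMangoldt m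

/-- ψ₁(x) = ∫₁ˣ ψ(u) du. -/
noncomputable def chebyshevPsi1 (x : ℝ) : ℝ := ∫ u in (1:ℝ)..x, chebyshevPsi u

open Finset ArithmeticFunction MeasureTheory

lemma eqOn_comp_natFloor_Ioo {α : Type*} (g : ℕ → α) (k : ℕ) :
    Set.EqOn (fun u : ℝ => g ⌊u⌋₊) (fun _ => g k) (Set.Ioo k (k + 1)) :=
  fun _ hu => congrArg g (Nat.floor_eq_on_Ico k _ (Set.Ioo_subset_Ico_self hu))

lemma intervalIntegrable_comp_natFloor {E : Type*} [NormedAddCommGroup E]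
    (g : ℕ → E) (k : ℕ) :
    IntervalIntegrable (fun u : ℝ => g ⌊u⌋₊) volume k (k + 1) :=
  intervalIntegrable_const.congr_uIoo <| by
    rw [Set.uIoo_of_le (by linarith)]
    exact (eqOn_comp_natFloor_Ioo g k).symm

section NatFloor

variable {E : Type*} [NormedAddCommGroup E] [NormedSpace ℝ E] [CompleteSpace E] (g : ℕ → E)

lemma integral_comp_natFloor_add_one (k : ℕ) :
    ∫ u in (k : ℝ)..k + 1, g ⌊u⌋₊ = g k := by
  rw [intervalIntegral.integral_congr_Ioo_of_le (by linarith) (eqOn_comp_natFloor_Ioo g k)]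
  simp only [intervalIntegral.integral_const, add_sub_cancel_left, one_smul]

lemma integral_comp_natFloor (n : ℕ) :
    ∫ u in (0 : ℝ)..n, g ⌊u⌋₊ = ∑ k ∈ range n, g k := by
  rw [← Nat.cast_zero, ← intervalIntegral.sum_integral_adjacent_intervals fun k _ => by
    simpa using intervalIntegrable_comp_natFloor g k]
  simp only [Nat.cast_add, Nat.cast_one, integral_comp_natFloor_add_one]

end NatFloor

lemma chebyshevPsi_natCast (m : ℕ) : chebyshevPsi m = ∑ j ∈ Icc 1 m, Λ j := by
  rw [chebyshevPsi, Nat.floor_natCast]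

lemma chebyshevPsi_zero : chebyshevPsi 0 = 0 := by
  simp [chebyshevPsi]

lemma chebyshevPsi_monotone : Monotone chebyshevPsi := fun _ _ hxy =>
  sum_le_sum_of_subset_of_nonneg (Icc_subset_Icc_right (Nat.floor_mono hxy))
    fun _ _ _ => vonMangoldt_nonneg

lemma chebyshevPsi1_natCast (n : ℕ) : chebyshevPsi1 n = ∑ m ∈ range n, chebyshevPsi m := by
  have hint (b : ℝ) : IntervalIntegrable chebyshevPsi volume 0 b :=
    chebyshevPsi_monotone.intervalIntegrable
  have hsum (k : ℕ) :
      ∫ u in (0 : ℝ)..k, chebyshevPsi u = ∑ m ∈ range k, chebyshevPsi m := by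
    simp only [chebyshevPsi_natCast]
    exact integral_comp_natFloor (fun m => ∑ j ∈ Icc 1 m, Λ j) k
  rw [chebyshevPsi1, ← intervalIntegral.integral_interval_sub_left (hint n) (hint 1),
    ← Nat.cast_one, hsum, hsum, sum_range_one, Nat.cast_zero, chebyshevPsi_zero, sub_zero]

lemma log_eta (j : ℕ) : Real.log (eta j) = Λ j := by
  rw [vonMangoldt_apply, eta]
  split_ifs <;> simp

lemma eta_pos (j : ℕ) : 0 < eta j := by
  unfold eta
  split_ifs
  exacts [Nat.minFac_pos j, Nat.one_pos]

lemma log_delta (n : ℕ) : Real.log (delta n) = ∑ m ∈ range n, chebyshevPsi m := by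
  have hpos : ∀ j, (eta j : ℝ) ≠ 0 := fun j => Nat.cast_ne_zero.mpr (eta_pos j).ne'
  simp only [delta, Nat.cast_prod]
  rw [Real.log_prod fun m _ => prod_ne_zero_iff.mpr fun j _ => hpos j]
  refine sum_congr rfl fun m _ => ?_
  rw [Real.log_prod fun j _ => hpos j, chebyshevPsi_natCast]
  exact sum_congr rfl fun j _ => log_eta j

lemma eta_two : eta 2 = 2 := by
  simp [eta, Nat.prime_two.isPrimePow]

lemma two_le_delta {n : ℕ} (hn : 3 ≤ n) : 2 ≤ delta n :=
  calc 2 = eta 2 := eta_two.symm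
    _ ≤ ∏ j ∈ Icc 1 2, eta j :=
      single_le_prod' (fun j _ => eta_pos j) (by simp)
    _ ≤ delta n :=
      single_le_prod' (f := fun m => ∏ j ∈ Icc 1 m, eta j)
        (fun m _ => one_le_prod' fun j _ => eta_pos j) (mem_range.mpr (by omega))

lemma abs_harmonic_sub_log_lt_one {N : ℕ} (hN : 2 ≤ N) :
    |(harmonic N : ℝ) - Real.log N| < 1 := by
  have hlo := Real.eulerMascheroniConstant_lt_eulerMascheroniSeq' N
  have hhi := Real.strictAnti_eulerMascheroniSeq' (show 1 < N by omega)
  rw [Real.eulerMascheroniSeq'_one] at hhi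
  simp only [Real.eulerMascheroniSeq', show N ≠ 0 by omega, if_false] at hlo hhi
  rw [abs_lt]
  constructor <;> linarith [Real.one_half_lt_eulerMascheroniConstant]

theorem harmonic_delta_close_to_psi1 (n : ℕ) (hn : 3 ≤ n) :
    |(∑ k ∈ Finset.Icc 1 (delta n), (1 : ℝ) / k) - chebyshevPsi1 n| < 1 := by
  have hsum : ∑ k ∈ Icc 1 (delta n), (1 : ℝ) / k = harmonic (delta n) := by
    simp [harmonic_eq_sum_Icc]
  rw [hsum, chebyshevPsi1_natCast, ← log_delta]
  exact abs_harmonic_sub_log_lt_one (two_le_delta hn)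
end

section
/- For every complex s with Re s > 1, −ζ′(s)/ζ(s) = s(s + 1)·∫₁^∞ ψ₁(x)/x^{s+2} dx. -/
open MeasureTheory

/-!
Since ψ is a step function with jumps Λ(n) at the integers n ≥ 1, ψ₁(x) = ∑_{n ≤ x} Λ(n)(x - n).
For each n, ∫_n^∞ (x - n) x^{-s-2} dx = n^{-s}/(s(s+1)), so integrating term by term
(justified by the absolute convergence of ∑ Λ(n) n^{-σ} for σ > 1) turns the integral into the
Dirichlet series of Λ divided by s(s+1), and that series is -ζ'/ζ.
-/

open Set
open scoped ArithmeticFunction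

section IntervalIntegral

variable {E : Type*} [NormedAddCommGroup E] [NormedSpace ℝ E] [CompleteSpace E]

theorem intervalIntegral_indicator_Ici_const {a b c : ℝ} (hac : a ≤ c) (hcb : c ≤ b) (y : E) :
    ∫ u in a..b, (Ici c).indicator (fun _ => y) u = (b - c) • y := by
  rw [intervalIntegral.integral_of_le (hac.trans hcb), integral_indicator_const _ measurableSet_Ici,
    measureReal_restrict_apply measurableSet_Ici]
  congr 1
  apply le_antisymm
  · calc volume.real (Ici c ∩ Ioc a b) ≤ volume.real (Icc c b) :=
          measureReal_mono (fun u hu => ⟨hu.1, hu.2.2⟩) measure_Icc_lt_top.ne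
      _ = b - c := Real.volume_real_Icc_of_le hcb
  · calc b - c = volume.real (Ioc c b) := (Real.volume_real_Ioc_of_le hcb).symm
      _ ≤ volume.real (Ici c ∩ Ioc a b) :=
          measureReal_mono (fun u hu => ⟨hu.1.le, hac.trans_lt hu.1, hu.2⟩)
            ((measure_mono inter_subset_right).trans_lt measure_Ioc_lt_top).ne

theorem intervalIntegral_sum_Icc_floor (f : ℕ → E) {x : ℝ} (hx : 1 ≤ x) :
    ∫ u in (1 : ℝ)..x, ∑ m ∈ Finset.Icc 1 ⌊u⌋₊, f m = ∑ m ∈ Finset.Icc 1 ⌊x⌋₊, (x - m) • f m := by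
  have hsum : EqOn (fun u => ∑ m ∈ Finset.Icc 1 ⌊u⌋₊, f m)
      (fun u => ∑ m ∈ Finset.Icc 1 ⌊x⌋₊, (Ici (m : ℝ)).indicator (fun _ => f m) u) (uIcc 1 x) := by
    intro u hu
    rw [uIcc_of_le hx] at hu
    simp only [Finset.sum_indicator_eq_sum_filter]
    congr 1
    ext m
    simp only [Finset.mem_filter, Finset.mem_Icc, mem_Ici,
      Nat.le_floor_iff (zero_le_one.trans hu.1)]
    exact ⟨fun h => ⟨⟨h.1, Nat.le_floor (h.2.trans hu.2)⟩, h.2⟩, fun h => ⟨h.1.1, h.2⟩⟩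
  rw [intervalIntegral.integral_congr hsum, intervalIntegral.integral_finsetSum]
  · refine Finset.sum_congr rfl fun m hm => ?_
    rw [Finset.mem_Icc] at hm
    exact intervalIntegral_indicator_Ici_const (mod_cast hm.1)
      ((Nat.cast_le.2 hm.2).trans (Nat.floor_le (zero_le_one.trans hx))) _
  · exact fun m _ => ⟨(integrableOn_const measure_Ioc_lt_top.ne).indicator measurableSet_Ici,
      (integrableOn_const measure_Ioc_lt_top.ne).indicator measurableSet_Ici⟩

end IntervalIntegral

section RieszKernel

variable {s : ℂ} {a c x : ℝ}

/-- `(c/x)^s (x - c)₊ / x²`; the factor `c^s` cancels the `n^{-s}` of `LSeries.term f s n`. -/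
noncomputable def rieszKernel (s : ℂ) (c x : ℝ) : ℂ :=
  (c : ℂ) ^ s * (max (x - c) 0 : ℝ) / (x : ℂ) ^ (s + 2)

theorem rieszKernel_of_le (h : x ≤ c) : rieszKernel s c x = 0 := by
  simp [rieszKernel, max_eq_right (sub_nonpos.2 h)]

theorem rieszKernel_eqOn_Ioi (hc : 0 ≤ c) :
    EqOn (rieszKernel s c)
      (fun x : ℝ => (c : ℂ) ^ s * ((x : ℂ) ^ (-(s + 1)) - c * (x : ℂ) ^ (-(s + 2)))) (Ioi c) := by
  intro x (hx : c < x)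
  have hx0 : (x : ℂ) ≠ 0 := Complex.ofReal_ne_zero.2 (hc.trans_lt hx).ne'
  have hpow : (x : ℂ) ^ (s + 2) = (x : ℂ) ^ (s + 1) * x := by
    rw [show s + 2 = s + 1 + 1 by ring, Complex.cpow_add _ _ hx0, Complex.cpow_one]
  have hpow_ne : (x : ℂ) ^ (s + 1) ≠ 0 := Complex.cpow_ne_zero_iff.2 (Or.inl hx0)
  simp only [rieszKernel, max_eq_left (sub_nonneg.2 hx.le), Complex.cpow_neg, hpow]
  push_cast
  field_simp

theorem integrableOn_rieszKernel (hs : 0 < s.re) (hc : 0 < c) :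
    IntegrableOn (rieszKernel s c) (Ioi a) := by
  have hIoi : IntegrableOn (rieszKernel s c) (Ioi c) := by
    refine (integrableOn_congr_fun (rieszKernel_eqOn_Ioi hc.le) measurableSet_Ioi).2 ?_
    refine (((integrableOn_Ioi_cpow_of_lt ?_ hc).sub
      ((integrableOn_Ioi_cpow_of_lt ?_ hc).const_mul _)).const_mul _) <;> simp <;> linarith
  exact hIoi.of_forall_sdiff_eq_zero measurableSet_Ioi fun x hx => rieszKernel_of_le (not_lt.1 hx.2)

theorem integral_rieszKernel (hs : 0 < s.re) (hc : 0 < c) (hac : a ≤ c) :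
    ∫ x in Ioi a, rieszKernel s c x = 1 / (s * (s + 1)) := by
  have hs0 : s ≠ 0 := fun h => by simp [h] at hs
  have hs1 : s + 1 ≠ 0 := fun h => by
    have := congrArg Complex.re h; simp at this; linarith
  have hc0 : (c : ℂ) ≠ 0 := Complex.ofReal_ne_zero.2 hc.ne'
  have hcs : (c : ℂ) ^ s ≠ 0 := Complex.cpow_ne_zero_iff.2 (Or.inl hc0)
  have hre1 : (-(s + 1)).re < -1 := by simp; linarith
  have hre2 : (-(s + 2)).re < -1 := by simp; linarith
  rw [setIntegral_eq_of_subset_of_forall_sdiff_eq_zero measurableSet_Ioi (Ioi_subset_Ioi hac)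
      fun x hx => rieszKernel_of_le (not_lt.1 hx.2),
    setIntegral_congr_fun measurableSet_Ioi (rieszKernel_eqOn_Ioi hc.le), integral_const_mul,
    integral_sub (integrableOn_Ioi_cpow_of_lt hre1 hc)
      ((integrableOn_Ioi_cpow_of_lt hre2 hc).const_mul _),
    integral_const_mul, integral_Ioi_cpow_of_lt hre1 hc, integral_Ioi_cpow_of_lt hre2 hc,
    show -(s + 1) + 1 = -s by ring, show -(s + 2) + 1 = -(s + 1) by ring, neg_div_neg_eq,
    neg_div_neg_eq, Complex.cpow_neg, Complex.cpow_neg, Complex.cpow_add _ _ hc0,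
    Complex.cpow_one]
  field_simp
  ring

theorem norm_rieszKernel_le (hc : 0 < c) (hcx : c < x) :
    ‖rieszKernel s c x‖ ≤ c ^ s.re * x ^ (-(s.re + 1)) := by
  have hx : 0 < x := hc.trans hcx
  rw [rieszKernel, max_eq_left (sub_nonneg.2 hcx.le), norm_div, norm_mul, Complex.norm_real,
    Complex.norm_cpow_eq_rpow_re_of_pos hc, Complex.norm_cpow_eq_rpow_re_of_pos hx,
    Real.norm_of_nonneg (sub_nonneg.2 hcx.le), div_le_iff₀ (Real.rpow_pos_of_pos hx _),
    mul_assoc, ← Real.rpow_add hx]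
  simp only [Complex.add_re, Complex.re_ofNat, show -(s.re + 1) + (s.re + 2) = 1 by ring,
    Real.rpow_one]
  gcongr
  linarith

theorem integral_norm_rieszKernel_le (hs : 0 < s.re) (hc : 0 < c) (hac : a ≤ c) :
    ∫ x in Ioi a, ‖rieszKernel s c x‖ ≤ 1 / s.re := by
  have hre : -(s.re + 1) < -1 := by linarith
  rw [setIntegral_eq_of_subset_of_forall_sdiff_eq_zero measurableSet_Ioi (Ioi_subset_Ioi hac)
      fun x hx => by rw [rieszKernel_of_le (not_lt.1 hx.2), norm_zero]]
  calc ∫ x in Ioi c, ‖rieszKernel s c x‖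
      ≤ ∫ x in Ioi c, c ^ s.re * x ^ (-(s.re + 1)) :=
        setIntegral_mono_on (integrableOn_rieszKernel hs hc).norm
          ((integrableOn_Ioi_rpow_of_lt hre hc).const_mul _) measurableSet_Ioi
          fun x hx => norm_rieszKernel_le hc hx
    _ = 1 / s.re := by
        rw [integral_const_mul, integral_Ioi_rpow_of_lt hre hc,
          show -(s.re + 1) + 1 = -s.re by ring, neg_div_neg_eq, Real.rpow_neg hc.le]
        field_simp

end RieszKernel

open LSeries
open scoped LSeries.notation

theorem sum_mul_sub_div_cpow_eq_tsum (f : ℕ → ℂ) (s : ℂ) {x : ℝ} (hx : 0 ≤ x) :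
    (∑ n ∈ Finset.Icc 1 ⌊x⌋₊, (x - n) * f n) / (x : ℂ) ^ (s + 2)
      = ∑' n, term f s n * rieszKernel s n x := by
  have hsupp : ∀ n ∉ Finset.Icc 1 ⌊x⌋₊, term f s n * rieszKernel s n x = 0 := by
    intro n hn
    rcases Nat.eq_zero_or_pos n with rfl | hn0
    · rw [term_zero, zero_mul]
    · simp only [Finset.mem_Icc, not_and, not_le] at hn
      rw [rieszKernel_of_le ((Nat.floor_lt hx).1 (hn hn0)).le, mul_zero]
  rw [tsum_eq_sum hsupp, Finset.sum_div]
  refine Finset.sum_congr rfl fun n hn => ?_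
  rw [Finset.mem_Icc] at hn
  have hnx : (n : ℝ) ≤ x := (Nat.cast_le.2 hn.2).trans (Nat.floor_le hx)
  have hn0 : (n : ℂ) ^ s ≠ 0 :=
    Complex.cpow_ne_zero_iff.2 (Or.inl (Nat.cast_ne_zero.2 (by omega)))
  rw [term_of_ne_zero (by omega), rieszKernel, max_eq_left (sub_nonneg.2 hnx)]
  push_cast
  field_simp

theorem LSeries_eq_mul_integral_sum_mul_sub (f : ℕ → ℂ) {s : ℂ} (hs : 0 < s.re)
    (hf : LSeriesSummable f s) :
    LSeries f s = s * (s + 1) *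
      ∫ x in Ioi (1 : ℝ), (∑ n ∈ Finset.Icc 1 ⌊x⌋₊, (x - n) * f n) / (x : ℂ) ^ (s + 2) := by
  have hs0 : s ≠ 0 := fun h => by simp [h] at hs
  have hs1 : s + 1 ≠ 0 := fun h => by
    have := congrArg Complex.re h; simp at this; linarith
  set F : ℕ → ℝ → ℂ := fun n x => term f s n * rieszKernel s n x
  have hF : ∀ n, IntegrableOn (F n) (Ioi 1) ∧ ∫ x in Ioi 1, F n x = term f s n / (s * (s + 1)) ∧
      ∫ x in Ioi 1, ‖F n x‖ ≤ ‖term f s n‖ / s.re := by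
    rintro (_ | n)
    · simp [F]
    have hn : (1 : ℝ) ≤ (n + 1 : ℕ) := by simp
    refine ⟨(integrableOn_rieszKernel hs (by positivity)).const_mul _, ?_, ?_⟩
    · rw [integral_const_mul, integral_rieszKernel hs (by positivity) hn, mul_one_div]
    · simp_rw [F, norm_mul]
      rw [integral_const_mul, div_eq_mul_one_div]
      exact mul_le_mul_of_nonneg_left (integral_norm_rieszKernel_le hs (by positivity) hn)
        (norm_nonneg _)
  have hsum : Summable fun n => ∫ x in Ioi 1, ‖F n x‖ :=
    (hf.norm.div_const s.re).of_nonneg_of_le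
      (fun n => setIntegral_nonneg measurableSet_Ioi fun x _ => norm_nonneg _) fun n => (hF n).2.2
  rw [setIntegral_congr_fun measurableSet_Ioi
      fun x hx => sum_mul_sub_div_cpow_eq_tsum f s (zero_le_one.trans (le_of_lt hx)),
    ← integral_tsum_of_summable_integral_norm (fun n => (hF n).1) hsum,
    tsum_congr fun n => (hF n).2.1, tsum_div_const, LSeries,
    mul_div_cancel₀ _ (mul_ne_zero hs0 hs1)]

theorem chebyshevPsi1_eq_sum {x : ℝ} (hx : 1 ≤ x) :
    chebyshevPsi1 x = ∑ n ∈ Finset.Icc 1 ⌊x⌋₊, (x - n) * Λ n :=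
  intervalIntegral_sum_Icc_floor _ hx

theorem neg_zeta_logDeriv_eq_integral (s : ℂ) (hs : 1 < s.re) :
    -(deriv riemannZeta s / riemannZeta s)
      = s * (s + 1) * ∫ x in Set.Ioi (1 : ℝ), (chebyshevPsi1 x : ℂ) / (x : ℂ) ^ (s + 2) := by
  have hpsi1 : ∀ x ∈ Ioi (1 : ℝ), (chebyshevPsi1 x : ℂ) / (x : ℂ) ^ (s + 2)
      = (∑ n ∈ Finset.Icc 1 ⌊x⌋₊, (x - n) * ↗Λ n) / (x : ℂ) ^ (s + 2) := fun x hx => by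
    rw [chebyshevPsi1_eq_sum (le_of_lt hx)]
    push_cast
    rfl
  rw [setIntegral_congr_fun measurableSet_Ioi hpsi1,
    ← LSeries_eq_mul_integral_sum_mul_sub _ (by linarith)
      (ArithmeticFunction.LSeriesSummable_vonMangoldt hs),
    ArithmeticFunction.LSeries_vonMangoldt_eq_deriv_riemannZeta_div hs, neg_div]
end

section
/- For all natural numbers a and b, if explog(a, b) holds, then |b − log(a + 1)| < 2. -/
/-- explog(a, b) holds iff there is a positive integer x with x > b + 1 and
(1 + 1/x)^(x·b) ≤ a + 1 < 4·(1 + 1/x)^(x·b), the powers taken in ℝ. -/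
def explog (a b : ℕ) : Prop :=
  ∃ x : ℕ, b + 1 < x ∧ (1 + 1 / (x : ℝ)) ^ (x * b) ≤ (a : ℝ) + 1 ∧
    (a : ℝ) + 1 < 4 * (1 + 1 / (x : ℝ)) ^ (x * b)

/-! With `c = (1 + 1/x)^(x b)` we have `x/(x+1) ≤ x log(1 + 1/x) ≤ 1`, so
`b - 1 < log c ≤ b` as soon as `b < x + 1`. Since `c ≤ a + 1 < 4c`, `log (a + 1)` lies
within `log 4 < 2` above `log c`, which gives the claim. -/

namespace Real

lemma log_four_lt_two : log 4 < 2 := by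
  rw [log_four_eq]
  linarith [log_two_lt_d9]

lemma log_one_add_one_div_le {x : ℝ} (hx : 0 < x) : log (1 + 1 / x) ≤ 1 / x := by
  linarith [log_le_sub_one_of_pos (by positivity : 0 < 1 + 1 / x)]

lemma one_div_add_one_le_log_one_add_one_div {x : ℝ} (hx : 0 < x) :
    1 / (x + 1) ≤ log (1 + 1 / x) := by
  have hinv : 1 - (1 + 1 / x)⁻¹ = 1 / (x + 1) := by field_simp; ring
  rw [← hinv]
  exact one_sub_inv_le_log_of_pos (by positivity)

lemma mul_log_one_add_one_div_le {x b : ℝ} (hx : 0 < x) (hb : 0 ≤ b) :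
    x * b * log (1 + 1 / x) ≤ b :=
  calc x * b * log (1 + 1 / x) ≤ x * b * (1 / x) := by
        gcongr; exact log_one_add_one_div_le hx
    _ = b := by field_simp

lemma sub_one_lt_mul_log_one_add_one_div {x b : ℝ} (hx : 0 < x) (hb : 0 ≤ b)
    (hbx : b < x + 1) : b - 1 < x * b * log (1 + 1 / x) :=
  calc b - 1 < x * b * (1 / (x + 1)) := by
        rw [mul_one_div, lt_div_iff₀ (by positivity)]
        nlinarith
    _ ≤ x * b * log (1 + 1 / x) := by
        gcongr; exact one_div_add_one_le_log_one_add_one_div hx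

lemma abs_sub_log_lt_two {b c y : ℝ} (hc : 0 < c) (hcy : c ≤ y) (hy : y < 4 * c)
    (hlow : b - 1 < log c) (hup : log c ≤ b) : |b - log y| < 2 := by
  have hlog_le : log c ≤ log y := log_le_log hc hcy
  have hlog_lt : log y < log 4 + log c := by
    rw [← log_mul (by norm_num) hc.ne']
    exact log_lt_log (hc.trans_le hcy) hy
  rw [abs_lt]
  constructor <;> linarith [log_four_lt_two]

end Real

theorem explog_log_close (a b : ℕ) (h : explog a b) :
    |(b : ℝ) - Real.log ((a : ℝ) + 1)| < 2 := by
  obtain ⟨x, hbx, hle, hlt⟩ := h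
  have hx : (0 : ℝ) < x := by exact_mod_cast (by omega : 0 < x)
  have hbx' : (b : ℝ) < x + 1 := by exact_mod_cast (by omega : b < x + 1)
  have hlog : Real.log ((1 + 1 / (x : ℝ)) ^ (x * b)) = x * b * Real.log (1 + 1 / x) := by
    rw [Real.log_pow]; push_cast; ring
  refine Real.abs_sub_log_lt_two (by positivity) hle hlt ?_ ?_ <;> rw [hlog]
  · exact Real.sub_one_lt_mul_log_one_add_one_div hx b.cast_nonneg hbx'
  · exact Real.mul_log_one_add_one_div_le hx b.cast_nonneg
end

section
/- For every natural number a there exists a natural number b such that explog(a, b) holds. -/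
open Real

lemma one_add_inv_pow_mul_le_exp (n k : ℕ) : (1 + (n : ℝ)⁻¹) ^ (n * k) ≤ exp k := by
  rw [pow_mul, ← exp_one_pow]
  gcongr
  exact one_add_inv_pow_le_exp

lemma exp_inv_add_one_le_one_add_inv {x : ℝ} (hx : 0 < x) : exp (x + 1)⁻¹ ≤ 1 + x⁻¹ := by
  have h := one_sub_le_exp_neg (x + 1)⁻¹
  rw [show 1 - (x + 1)⁻¹ = (1 + x⁻¹)⁻¹ by field_simp; ring, exp_neg,
    inv_le_inv₀ (by positivity) (exp_pos _)] at h
  exact h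

lemma exp_div_add_one_le_one_add_inv_pow {x : ℝ} (hx : 0 < x) (m : ℕ) :
    exp (m / (x + 1)) ≤ (1 + x⁻¹) ^ m := by
  rw [div_eq_mul_inv, exp_nat_mul]
  gcongr
  exact exp_inv_add_one_le_one_add_inv hx

lemma exp_four_div_three_lt_four : exp (4 / 3) < 4 := by
  rw [← lt_log_iff_exp_lt (by norm_num), show (4 : ℝ) = 2 ^ 2 by norm_num, log_pow]
  linarith [log_two_gt_d9]

lemma exp_add_one_le_four_mul_one_add_inv_pow (b : ℕ) :
    exp (b + 1) ≤ 4 * (1 + ((3 * (b + 1) : ℕ) : ℝ)⁻¹) ^ (3 * (b + 1) * b) := by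
  set x : ℝ := ((3 * (b + 1) : ℕ) : ℝ)
  set m : ℕ := 3 * (b + 1) * b
  have hgap : (b : ℝ) + 1 - m / (x + 1) ≤ 4 / 3 := by
    simp only [m, x]
    push_cast
    rw [sub_le_iff_le_add, ← sub_le_iff_le_add', le_div_iff₀ (by positivity)]
    nlinarith
  calc exp (b + 1) = exp (b + 1 - m / (x + 1)) * exp (m / (x + 1)) := by rw [← exp_add]; ring_nf
    _ ≤ 4 * (1 + x⁻¹) ^ m := by
      gcongr
      · exact (exp_le_exp.2 hgap).trans exp_four_div_three_lt_four.le
      · exact exp_div_add_one_le_one_add_inv_pow (by positivity) m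

lemma exp_natFloor_log_le {y : ℝ} (hy : 1 ≤ y) : exp ⌊log y⌋₊ ≤ y :=
  (exp_le_exp.2 (Nat.floor_le (log_nonneg hy))).trans_eq (exp_log (by linarith))

lemma lt_exp_natFloor_log_add_one {y : ℝ} (hy : 0 < y) : y < exp (⌊log y⌋₊ + 1) :=
  (exp_log hy).symm.trans_lt (exp_lt_exp.2 (Nat.lt_floor_add_one _))

lemma explog_of_exp_le_of_lt_exp {a b : ℕ} (hle : exp b ≤ a + 1)
    (hlt : (a : ℝ) + 1 < exp (b + 1)) : explog a b := by
  refine ⟨3 * (b + 1), by omega, ?_, ?_⟩ <;> rw [one_div]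
  · exact (one_add_inv_pow_mul_le_exp _ b).trans hle
  · exact hlt.trans_le (exp_add_one_le_four_mul_one_add_inv_pow b)

theorem explog_total (a : ℕ) : ∃ b : ℕ, explog a b := by
  have ha : (1 : ℝ) ≤ a + 1 := by linarith [a.cast_nonneg (α := ℝ)]
  exact ⟨_, explog_of_exp_le_of_lt_exp (exp_natFloor_log_le ha)
    (lt_exp_natFloor_log_add_one (by linarith))⟩
end
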